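/- arXiv:2402.14397 — 3 statements merged into one kernel-verified Lean document; each statement's English description precedes it below -/
import Mathlib

section
/- Let d ≥ 1, σ > 0, and μ0, μ1 ∈ ℝ^d. Let N(μ, σ² I_d) denote the Gaussian measure on ℝ^d with mean μ and covariance σ² I_d, i.e., the product over coordinates j of gaussianReal(μ_j, σ²). Then tv(N(μ0, σ² I_d), N(μ1, σ² I_d)) = erf(‖μ0 − μ1‖₂ / (2√2 σ)), where ‖·‖₂ is the Euclidean norm. -/
/-!
The likelihood ratio of the two product Gaussians is the exponential of an affine function of
`⟨μ0 - μ1, x⟩`, so the set where the first density dominates is a half-space. By Scheffé's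
identity the total variation distance is the difference of the masses the two measures give to
this half-space. Projecting onto `μ0 - μ1` turns the two laws into one-dimensional Gaussians with
variance `‖μ0 - μ1‖² σ²` whose means differ by `‖μ0 - μ1‖²`, and the difference of their masses
on the half-line at the midpoint is the mass of a centred Gaussian on a symmetric interval, an
`erf` value.
-/

open MeasureTheory ProbabilityTheory

noncomputable def tv {Ω : Type*} [MeasurableSpace Ω] (P Q : Measure Ω) : ℝ :=
  ⨆ A : {A : Set Ω // MeasurableSet A}, |(P A.1).toReal - (Q A.1).toReal|

noncomputable def erf (x : ℝ) : ℝ :=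
  (2 / Real.sqrt Real.pi) * ∫ t in (0:ℝ)..x, Real.exp (-t ^ 2)

open Real
open scoped NNReal ENNReal

section TotalVariation

variable {Ω : Type*} [MeasurableSpace Ω]

lemma tv_self (P : Measure Ω) : tv P P = 0 := by
  simp [tv]

lemma tv_eq_measureReal_sub_of_hahn (P Q : Measure Ω) [IsProbabilityMeasure P]
    [IsProbabilityMeasure Q] {S : Set Ω} (hS : MeasurableSet S)
    (hpos : ∀ B ⊆ S, MeasurableSet B → Q B ≤ P B)
    (hneg : ∀ B ⊆ Sᶜ, MeasurableSet B → P B ≤ Q B) :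
    tv P Q = P.real S - Q.real S := by
  have hposR : ∀ B ⊆ S, MeasurableSet B → Q.real B ≤ P.real B := fun B hBS hB =>
    ENNReal.toReal_mono (measure_ne_top _ _) (hpos B hBS hB)
  have hnegR : ∀ B ⊆ Sᶜ, MeasurableSet B → P.real B ≤ Q.real B := fun B hBS hB =>
    ENNReal.toReal_mono (measure_ne_top _ _) (hneg B hBS hB)
  have upper : ∀ A, MeasurableSet A → P.real A - Q.real A ≤ P.real S - Q.real S := by
    intro A hA
    have hAS := hnegR (A \ S) (Set.sdiff_subset_compl A S) (hA.diff hS)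
    have hSA := hposR (S \ A) Set.sdiff_subset (hS.diff hA)
    have hP := measureReal_inter_add_sdiff (μ := P) (s := A) hS
    have hQ := measureReal_inter_add_sdiff (μ := Q) (s := A) hS
    have hP' := measureReal_inter_add_sdiff (μ := P) (s := S) hA
    have hQ' := measureReal_inter_add_sdiff (μ := Q) (s := S) hA
    rw [Set.inter_comm S A] at hP' hQ'
    linarith
  have lower : ∀ A, MeasurableSet A → Q.real A - P.real A ≤ P.real S - Q.real S := by
    intro A hA
    have hAc := upper Aᶜ hA.compl
    rw [probReal_compl_eq_one_sub hA, probReal_compl_eq_one_sub hA] at hAc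
    linarith
  have hbound : ∀ A : {A : Set Ω // MeasurableSet A},
      |P.real A.1 - Q.real A.1| ≤ P.real S - Q.real S := fun A =>
    abs_sub_le_iff.mpr ⟨upper A.1 A.2, lower A.1 A.2⟩
  refine le_antisymm (ciSup_le hbound) ?_
  exact le_ciSup_of_le ⟨_, Set.forall_mem_range.mpr hbound⟩ ⟨S, hS⟩ (le_abs_self _)

lemma tv_eq_measureReal_sub_of_withDensity {P Q : Measure Ω} [IsProbabilityMeasure P]
    [IsProbabilityMeasure Q] (ν : Measure Ω) {f g : Ω → ℝ≥0∞} (hf : Measurable f)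
    (hg : Measurable g) (hP : P = ν.withDensity f) (hQ : Q = ν.withDensity g) :
    tv P Q = P.real {x | g x ≤ f x} - Q.real {x | g x ≤ f x} := by
  refine tv_eq_measureReal_sub_of_hahn P Q (measurableSet_le hg hf) (fun B hBS hB => ?_)
    (fun B hBS hB => ?_) <;> rw [hP, hQ, withDensity_apply _ hB, withDensity_apply _ hB]
  · exact setLIntegral_mono' hB fun x hx => hBS hx
  · exact setLIntegral_mono' hB fun x hx => (not_le.mp fun h => hBS hx h).le

end TotalVariation

theorem lintegral_fin_nat_prod_eq_prod {n : ℕ} {E : Fin n → Type*}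
    [∀ i, MeasurableSpace (E i)] {μ : (i : Fin n) → Measure (E i)} [∀ i, SigmaFinite (μ i)]
    {f : (i : Fin n) → E i → ℝ≥0∞} (hf : ∀ i, Measurable (f i)) :
    ∫⁻ x, ∏ i, f i (x i) ∂(Measure.pi μ) = ∏ i, ∫⁻ x, f i x ∂(μ i) := by
  induction n with
  | zero => simp
  | succ n ih =>
      calc
        _ = ∫⁻ x : E 0 × ((i : Fin n) → E ((0 : Fin (n + 1)).succAbove i)),
            f 0 x.1 * ∏ i : Fin n, f _ (x.2 i)
            ∂((μ 0).prod (Measure.pi fun i ↦ μ ((0 : Fin (n + 1)).succAbove i))) := by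
          rw [← ((measurePreserving_piFinSuccAbove μ 0).symm).lintegral_comp_emb
            (MeasurableEquiv.measurableEmbedding _)]
          refine lintegral_congr fun a => ?_
          rw [Fin.prod_univ_succAbove _ 0]
          change f 0 (Fin.insertNth 0 a.1 a.2 0)
            * ∏ i, f _ (Fin.insertNth 0 a.1 a.2 ((0 : Fin (n + 1)).succAbove i)) = _
          simp only [Fin.insertNth_apply_same, Fin.insertNth_apply_succAbove]
        _ = (∫⁻ x, f 0 x ∂μ 0) * ∏ i : Fin n, ∫⁻ x, f _ x ∂(μ ((0 : Fin (n + 1)).succAbove i)) := by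
          rw [← ih fun i => hf _, ← lintegral_prod_mul (hf 0).aemeasurable]
          exact (Finset.measurable_prod _ fun i _ =>
            (hf _).comp (measurable_pi_apply i)).aemeasurable
        _ = ∏ i, ∫⁻ x, f i x ∂(μ i) :=
          (Fin.prod_univ_succAbove (fun i => ∫⁻ x, f i x ∂(μ i)) 0).symm

theorem lintegral_fintype_prod_eq_prod {ι : Type*} [Fintype ι] {E : ι → Type*}
    [∀ i, MeasurableSpace (E i)] {μ : (i : ι) → Measure (E i)} [∀ i, SigmaFinite (μ i)]
    {f : (i : ι) → E i → ℝ≥0∞} (hf : ∀ i, Measurable (f i)) :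
    ∫⁻ x, ∏ i, f i (x i) ∂(Measure.pi μ) = ∏ i, ∫⁻ x, f i x ∂(μ i) := by
  let e := (Fintype.equivFin ι).symm
  rw [← (measurePreserving_piCongrLeft _ e).lintegral_comp_emb
    (MeasurableEquiv.measurableEmbedding _)]
  simp_rw [← e.prod_comp, MeasurableEquiv.coe_piCongrLeft, Equiv.piCongrLeft_apply_apply]
  exact lintegral_fin_nat_prod_eq_prod fun i => hf (e i)

theorem MeasureTheory.Measure.pi_withDensity {ι : Type*} [Fintype ι] {E : ι → Type*}
    [∀ i, MeasurableSpace (E i)] (μ : (i : ι) → Measure (E i)) [∀ i, SigmaFinite (μ i)]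
    {f : (i : ι) → E i → ℝ≥0∞} (hf : ∀ i, Measurable (f i))
    [∀ i, SigmaFinite ((μ i).withDensity (f i))] :
    Measure.pi (fun i => (μ i).withDensity (f i))
      = (Measure.pi μ).withDensity fun x => ∏ i, f i (x i) := by
  refine Measure.pi_eq fun s hs => ?_
  rw [withDensity_apply _ (MeasurableSet.univ_pi hs), Measure.restrict_pi_pi,
    lintegral_fintype_prod_eq_prod hf]
  exact Finset.prod_congr rfl fun i _ => (withDensity_apply _ (hs i)).symm

section Gaussian

variable {ι : Type*} [Fintype ι]

lemma prod_gaussianPDFReal (m : ι → ℝ) (v : ℝ≥0) (x : ι → ℝ) :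
    ∏ j, gaussianPDFReal (m j) v (x j)
      = (√(2 * π * v))⁻¹ ^ Fintype.card ι * exp (-(∑ j, (x j - m j) ^ 2) / (2 * v)) := by
  simp only [gaussianPDFReal, Finset.prod_mul_distrib, Finset.prod_const, Finset.card_univ,
    ← Real.exp_sum, Finset.sum_div, neg_div, Finset.sum_neg_distrib]

lemma prod_gaussianPDFReal_le_iff (m₀ m₁ : ι → ℝ) {v : ℝ≥0} (hv : v ≠ 0) (x : ι → ℝ) :
    ∏ j, gaussianPDFReal (m₁ j) v (x j) ≤ ∏ j, gaussianPDFReal (m₀ j) v (x j)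
      ↔ (∑ j, (m₀ j - m₁ j) * m₀ j + ∑ j, (m₀ j - m₁ j) * m₁ j) / 2
          ≤ ∑ j, (m₀ j - m₁ j) * x j := by
  have hsq : ∑ j, (x j - m₁ j) ^ 2 - ∑ j, (x j - m₀ j) ^ 2
      = 2 * ∑ j, (m₀ j - m₁ j) * x j
          - (∑ j, (m₀ j - m₁ j) * m₀ j + ∑ j, (m₀ j - m₁ j) * m₁ j) := by
    simp only [← Finset.sum_sub_distrib, ← Finset.sum_add_distrib, Finset.mul_sum]
    exact Finset.sum_congr rfl fun j _ => by ring
  rw [prod_gaussianPDFReal, prod_gaussianPDFReal, mul_le_mul_iff_right₀ (by positivity),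
    exp_le_exp, div_le_div_iff_of_pos_right (by positivity), neg_le_neg_iff]
  constructor <;> intro h <;> linarith

lemma pi_gaussianReal_eq_withDensity (m : ι → ℝ) {v : ℝ≥0} (hv : v ≠ 0) :
    Measure.pi (fun j => gaussianReal (m j) v)
      = volume.withDensity fun x => ENNReal.ofReal (∏ j, gaussianPDFReal (m j) v (x j)) := by
  have (j : ι) : SigmaFinite (volume.withDensity (gaussianPDF (m j) v)) :=
    gaussianReal_of_var_ne_zero (m j) hv ▸ inferInstance
  simp_rw [gaussianReal_of_var_ne_zero _ hv]
  rw [Measure.pi_withDensity _ fun j => measurable_gaussianPDF _ _]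
  simp_rw [ENNReal.ofReal_prod_of_nonneg fun j _ => gaussianPDFReal_nonneg _ _ _]
  rfl

lemma map_pi_gaussianReal_sum_mul (c m : ι → ℝ) (v : ι → ℝ≥0) :
    (Measure.pi fun j => gaussianReal (m j) (v j)).map (fun x => ∑ j, c j * x j)
      = gaussianReal (∑ j, c j * m j) (∑ j, (c j ^ 2).toNNReal * v j) := by
  have hT : Measurable fun x : ι → ℝ => ∑ j, c j * x j :=
    Finset.measurable_sum _ fun j _ => (measurable_pi_apply j).const_mul _
  refine Measure.ext_of_charFun (funext fun t => ?_)
  have hexp (x : ι → ℝ) : Complex.exp (t * ↑(∑ j, c j * x j) * Complex.I)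
      = ∏ j, Complex.exp (↑(t * c j) * x j * Complex.I) := by
    rw [← Complex.exp_sum]
    push_cast
    rw [Finset.mul_sum, Finset.sum_mul]
    exact congrArg _ (Finset.sum_congr rfl fun j _ => by ring)
  rw [charFun_apply_real, integral_map hT.aemeasurable (by fun_prop)]
  simp_rw [hexp]
  rw [integral_fintype_prod_eq_prod fun j (y : ℝ) => Complex.exp (↑(t * c j) * y * Complex.I)]
  simp_rw [← charFun_apply_real, charFun_gaussianReal, ← Complex.exp_sum]
  congr 1
  push_cast
  simp only [Real.coe_toNNReal _ (sq_nonneg _), Finset.sum_sub_distrib, Finset.mul_sum,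
    Finset.sum_mul, Finset.sum_div]
  congr 1 <;> exact Finset.sum_congr rfl fun j _ => by push_cast; ring


lemma integral_exp_neg_sq_neg_self (s : ℝ) : ∫ u in -s..s, exp (-u ^ 2) = √π * erf s := by
  have hint (a b : ℝ) : IntervalIntegrable (fun u => exp (-u ^ 2)) volume a b :=
    (by fun_prop : Continuous fun u : ℝ => exp (-u ^ 2)).intervalIntegrable a b
  have heven : ∫ u in -s..0, exp (-u ^ 2) = ∫ u in 0..s, exp (-u ^ 2) := by
    have hneg := intervalIntegral.integral_comp_neg (a := 0) (b := s) fun u => exp (-u ^ 2)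
    simp only [neg_sq, neg_zero] at hneg
    exact hneg.symm
  rw [← intervalIntegral.integral_add_adjacent_intervals (hint (-s) 0) (hint 0 s), heven, erf]
  field_simp
  ring

lemma gaussianReal_zero_real_Ico_neg_self {w : ℝ≥0} (hw : w ≠ 0) {t : ℝ} (ht : 0 ≤ t) :
    (gaussianReal 0 w).real (Set.Ico (-t) t) = erf (t / √(2 * w)) := by
  have hs : 0 < √(2 * (w : ℝ)) := Real.sqrt_pos.mpr (by positivity)
  have hsub : ∫ x in -t..t, exp (-x ^ 2 / (2 * w))
      = √(2 * w) * ∫ u in -(t / √(2 * w))..t / √(2 * w), exp (-u ^ 2) := by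
    have hscale :=
      intervalIntegral.integral_comp_div (a := -t) (b := t) (fun u => exp (-u ^ 2)) hs.ne'
    rw [smul_eq_mul, neg_div] at hscale
    rw [← hscale]
    congr with x
    rw [div_pow, Real.sq_sqrt (by positivity), neg_div]
  rw [measureReal_def, gaussianReal_apply_eq_integral 0 hw,
    ENNReal.toReal_ofReal (integral_nonneg fun x => gaussianPDFReal_nonneg _ _ _),
    integral_Ico_eq_integral_Ioo, ← integral_Ioc_eq_integral_Ioo,
    ← intervalIntegral.integral_of_le (by linarith)]
  simp only [gaussianPDFReal, sub_zero]
  rw [intervalIntegral.integral_const_mul, hsub, integral_exp_neg_sq_neg_self,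
    show 2 * π * (w : ℝ) = π * (2 * w) by ring, Real.sqrt_mul pi_pos.le]
  field_simp

lemma gaussianReal_real_Ici_midpoint_sub {w : ℝ≥0} (hw : w ≠ 0) {a b : ℝ} (hba : b ≤ a) :
    (gaussianReal a w).real (Set.Ici ((a + b) / 2))
        - (gaussianReal b w).real (Set.Ici ((a + b) / 2))
      = erf ((a - b) / (2 * √(2 * w))) := by
  have shift (m s : ℝ) :
      (gaussianReal m w).real (Set.Ici s) = (gaussianReal 0 w).real (Set.Ici (s - m)) := by
    rw [← zero_add m, ← gaussianReal_map_add_const,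
      map_measureReal_apply (measurable_add_const m) measurableSet_Ici,
      Set.preimage_add_const_Ici, zero_add]
  rw [shift a, shift b, ← measureReal_sdiff (Set.Ici_subset_Ici.2 (by linarith)) measurableSet_Ici,
    Set.Ici_sdiff_Ici, show (a + b) / 2 - a = -((a - b) / 2) by ring,
    show (a + b) / 2 - b = (a - b) / 2 by ring,
    gaussianReal_zero_real_Ico_neg_self hw (by linarith), div_div]

theorem tv_pi_gaussianReal_eq_sub (m₀ m₁ : ι → ℝ) {v : ℝ≥0} (hv : v ≠ 0) :
    tv (Measure.pi fun j => gaussianReal (m₀ j) v) (Measure.pi fun j => gaussianReal (m₁ j) v)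
      = (gaussianReal (∑ j, (m₀ j - m₁ j) * m₀ j) (∑ j, ((m₀ j - m₁ j) ^ 2).toNNReal * v)).real
            (Set.Ici ((∑ j, (m₀ j - m₁ j) * m₀ j + ∑ j, (m₀ j - m₁ j) * m₁ j) / 2))
        - (gaussianReal (∑ j, (m₀ j - m₁ j) * m₁ j) (∑ j, ((m₀ j - m₁ j) ^ 2).toNNReal * v)).real
            (Set.Ici ((∑ j, (m₀ j - m₁ j) * m₀ j + ∑ j, (m₀ j - m₁ j) * m₁ j) / 2)) := by
  set T : (ι → ℝ) → ℝ := fun x => ∑ j, (m₀ j - m₁ j) * x j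
  have hT : Measurable T :=
    Finset.measurable_sum _ fun j _ => (measurable_pi_apply j).const_mul _
  have hS : {x | ENNReal.ofReal (∏ j, gaussianPDFReal (m₁ j) v (x j))
      ≤ ENNReal.ofReal (∏ j, gaussianPDFReal (m₀ j) v (x j))}
        = T ⁻¹' Set.Ici ((∑ j, (m₀ j - m₁ j) * m₀ j + ∑ j, (m₀ j - m₁ j) * m₁ j) / 2) := by
    ext x
    exact (ENNReal.ofReal_le_ofReal_iff (Finset.prod_nonneg fun j _ =>
      gaussianPDFReal_nonneg _ _ _)).trans (prod_gaussianPDFReal_le_iff _ _ hv x)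
  rw [tv_eq_measureReal_sub_of_withDensity volume (by fun_prop) (by fun_prop)
      (pi_gaussianReal_eq_withDensity m₀ hv) (pi_gaussianReal_eq_withDensity m₁ hv), hS,
    ← map_measureReal_apply hT measurableSet_Ici, ← map_measureReal_apply hT measurableSet_Ici,
    map_pi_gaussianReal_sum_mul, map_pi_gaussianReal_sum_mul]

theorem tv_pi_gaussianReal_eq_erf (m₀ m₁ : ι → ℝ) {v : ℝ≥0} (hv : v ≠ 0) :
    tv (Measure.pi fun j => gaussianReal (m₀ j) v) (Measure.pi fun j => gaussianReal (m₁ j) v)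
      = erf (√(∑ j, (m₀ j - m₁ j) ^ 2) / (2 * √(2 * v))) := by
  rcases eq_or_ne m₀ m₁ with rfl | hne
  · simp [tv_self, erf]
  set D2 := ∑ j, (m₀ j - m₁ j) ^ 2
  have hD2 : 0 < D2 := by
    obtain ⟨j, hj⟩ := Function.ne_iff.mp hne
    exact Finset.sum_pos' (fun j _ => sq_nonneg _)
      ⟨j, Finset.mem_univ _, sq_pos_iff.mpr (sub_ne_zero.mpr hj)⟩
  have hmean : ∑ j, (m₀ j - m₁ j) * m₀ j - ∑ j, (m₀ j - m₁ j) * m₁ j = D2 := by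
    rw [← Finset.sum_sub_distrib]
    exact Finset.sum_congr rfl fun j _ => by ring
  have hvar : ((∑ j, ((m₀ j - m₁ j) ^ 2).toNNReal * v : ℝ≥0) : ℝ) = D2 * v := by
    push_cast [Real.coe_toNNReal _ (sq_nonneg _)]
    rw [Finset.sum_mul]
  have hvar0 : ∑ j, ((m₀ j - m₁ j) ^ 2).toNNReal * v ≠ 0 := by
    rw [← NNReal.coe_ne_zero, hvar]
    exact (mul_pos hD2 (by positivity)).ne'
  rw [tv_pi_gaussianReal_eq_sub _ _ hv, gaussianReal_real_Ici_midpoint_sub hvar0 (by linarith),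
    hmean, hvar, show 2 * (D2 * (v : ℝ)) = D2 * (2 * v) by ring, Real.sqrt_mul hD2.le]
  congr 1
  field_simp
  exact (Real.sq_sqrt hD2.le).symm

end Gaussian

theorem tv_gaussian_pi_eq_erf_general (d : ℕ) (σ : ℝ) (hσ : 0 < σ)
    (μ0 μ1 : Fin d → ℝ) :
    tv (Measure.pi fun j => gaussianReal (μ0 j) ((σ ^ 2).toNNReal))
        (Measure.pi fun j => gaussianReal (μ1 j) ((σ ^ 2).toNNReal))
      = erf (Real.sqrt (∑ j, (μ0 j - μ1 j) ^ 2) / (2 * Real.sqrt 2 * σ)) := by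
  have hv : ((σ ^ 2).toNNReal : ℝ) = σ ^ 2 := Real.coe_toNNReal _ (sq_nonneg σ)
  rw [tv_pi_gaussianReal_eq_erf _ _ (by positivity), hv, Real.sqrt_mul zero_le_two,
    Real.sqrt_sq hσ.le, mul_assoc]

/-- Total variation between two isotropic Gaussians on `ℝ^d` with the same
covariance `σ² I_d`: `tv = erf (‖μ0 - μ1‖₂ / (2√2 σ))`. -/
theorem tv_gaussian_pi_eq_erf (d : ℕ) (hd : 1 ≤ d) (σ : ℝ) (hσ : 0 < σ)
    (μ0 μ1 : Fin d → ℝ) :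
    tv (Measure.pi fun j => gaussianReal (μ0 j) ((σ ^ 2).toNNReal))
        (Measure.pi fun j => gaussianReal (μ1 j) ((σ ^ 2).toNNReal))
      = erf (Real.sqrt (∑ j, (μ0 j - μ1 j) ^ 2) / (2 * Real.sqrt 2 * σ)) :=
  tv_gaussian_pi_eq_erf_general d σ hσ μ0 μ1
end

section
/- For all real numbers μ0, μ1 and σ > 0, the total variation distance between the one-dimensional Gaussians satisfies tv(gaussianReal(μ0, σ²), gaussianReal(μ1, σ²)) = erf(|μ0 − μ1| / (2√2 σ)). -/
open MeasureTheory ProbabilityTheory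
open scoped NNReal Real

set_option maxHeartbeats 4000000

lemma tv_comm {Ω : Type*} [MeasurableSpace Ω] (P Q : Measure Ω) : tv P Q = tv Q P := by
  unfold tv
  exact iSup_congr fun A => abs_sub_comm _ _

lemma erf_integral_even (b : ℝ) :
    ∫ t in (-b)..b, Real.exp (-t ^ 2) = 2 * ∫ t in (0:ℝ)..b, Real.exp (-t ^ 2) := by
  have hcont : Continuous fun t : ℝ => Real.exp (-t ^ 2) := by continuity
  have h1 : ∫ t in (-b)..(0:ℝ), Real.exp (-t ^ 2) = ∫ t in (0:ℝ)..b, Real.exp (-t ^ 2) := by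
    have h := intervalIntegral.integral_comp_neg (a := (0:ℝ)) (b := b)
      (fun t => Real.exp (-t ^ 2))
    simp only [Even.neg_pow even_two, neg_zero] at h
    exact h.symm
  rw [← intervalIntegral.integral_add_adjacent_intervals (a := -b) (b := 0) (c := b)
    (hcont.intervalIntegrable _ _) (hcont.intervalIntegrable _ _), h1]
  ring

lemma integral_gaussianPDFReal_symm (μ σ a : ℝ) (hσ : 0 < σ) (v : ℝ≥0) (hv : (v:ℝ) = σ ^ 2) :
    ∫ x in (μ - a)..(μ + a), gaussianPDFReal μ v x
      = erf (a / (Real.sqrt 2 * σ)) := by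
  set c : ℝ := Real.sqrt 2 * σ with hc
  have hc0 : 0 < c := by positivity
  have hpt : ∀ x : ℝ, gaussianPDFReal μ v x
      = (Real.sqrt (2 * Real.pi * (v : ℝ)))⁻¹ * Real.exp (-((x - μ) / c) ^ 2) := by
    intro x
    have h : -(x - μ) ^ 2 / (2 * (v:ℝ)) = -((x - μ) / c) ^ 2 := by
      rw [hv, div_pow, hc, mul_pow, Real.sq_sqrt (by norm_num : (0:ℝ) ≤ 2), neg_div]
    simp only [gaussianPDFReal_def]
    rw [h]
  simp only [hpt]
  rw [intervalIntegral.integral_const_mul]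
  have h2 : ∫ x in (μ - a)..(μ + a), Real.exp (-((x - μ) / c) ^ 2)
      = ∫ x in (-a)..a, Real.exp (-(x / c) ^ 2) := by
    have := intervalIntegral.integral_comp_sub_right (a := μ - a) (b := μ + a)
      (fun x => Real.exp (-(x / c) ^ 2)) μ
    simpa using this
  rw [h2]
  have h3 : ∫ x in (-a)..a, Real.exp (-(x / c) ^ 2)
      = c • ∫ x in (-a / c)..(a / c), Real.exp (-x ^ 2) := by
    exact intervalIntegral.integral_comp_div (fun x => Real.exp (-x ^ 2)) hc0.ne'
  rw [h3, smul_eq_mul, show -a / c = -(a / c) by ring, erf_integral_even]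
  rw [erf]
  have hs : Real.sqrt (2 * Real.pi * (v : ℝ))
      = Real.sqrt 2 * Real.sqrt Real.pi * σ := by
    rw [hv, Real.sqrt_mul (by positivity), Real.sqrt_sq hσ.le,
      Real.sqrt_mul (by norm_num : (0:ℝ) ≤ 2)]
  rw [hs, hc]
  have hπ : 0 < Real.sqrt Real.pi := Real.sqrt_pos.mpr Real.pi_pos
  have h2' : 0 < Real.sqrt 2 := by positivity
  field_simp

lemma tv_gaussianReal_aux (μ0 μ1 σ : ℝ) (hσ : 0 < σ) (hle : μ0 ≤ μ1) :
    tv (gaussianReal μ0 ((σ ^ 2).toNNReal)) (gaussianReal μ1 ((σ ^ 2).toNNReal))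
      = erf ((μ1 - μ0) / (2 * Real.sqrt 2 * σ)) := by
  set v : ℝ≥0 := (σ ^ 2).toNNReal with hv_def
  have hvR : ((v : ℝ≥0) : ℝ) = σ ^ 2 := Real.coe_toNNReal _ (sq_nonneg σ)
  have hv : v ≠ 0 := by
    simp only [hv_def, ne_eq, Real.toNNReal_eq_zero, not_le]
    positivity
  set P := gaussianReal μ0 v with hP
  set Q := gaussianReal μ1 v with hQ
  set f0 : ℝ → ℝ := gaussianPDFReal μ0 v with hf0
  set f1 : ℝ → ℝ := gaussianPDFReal μ1 v with hf1
  set m : ℝ := (μ0 + μ1) / 2 with hm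
  set d : ℝ := μ1 - μ0 with hd
  have hd0 : 0 ≤ d := by simp [hd]; linarith
  have happly : ∀ (μ : ℝ) (s : Set ℝ), ((gaussianReal μ v) s).toReal
      = ∫ x in s, gaussianPDFReal μ v x := by
    intro μ s
    rw [gaussianReal_apply_eq_integral μ hv s,
      ENNReal.toReal_ofReal (integral_nonneg fun x => gaussianPDFReal_nonneg μ v x)]
  have hint0 : Integrable f0 := integrable_gaussianPDFReal μ0 v
  have hint1 : Integrable f1 := integrable_gaussianPDFReal μ1 v
  set h : ℝ → ℝ := fun x => f0 x - f1 x with hh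
  have hInt : Integrable h := hint0.sub hint1
  -- pointwise comparison
  have hcmp : ∀ μ μ' x : ℝ, (x - μ) ^ 2 ≤ (x - μ') ^ 2 →
      gaussianPDFReal μ' v x ≤ gaussianPDFReal μ v x := by
    intro μ μ' x hx
    rw [gaussianPDFReal_def, gaussianPDFReal_def]
    have h2v : (0:ℝ) < 2 * (v : ℝ) := by rw [hvR]; positivity
    have : (0:ℝ) ≤ (Real.sqrt (2 * Real.pi * (v:ℝ)))⁻¹ := by positivity
    refine mul_le_mul_of_nonneg_left (Real.exp_le_exp.mpr ?_) this
    exact (div_le_div_iff_of_pos_right h2v).mpr (neg_le_neg hx)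
  have hS_nonneg : ∀ x ∈ Set.Iic m, 0 ≤ h x := by
    intro x hx
    simp only [Set.mem_Iic] at hx
    have : (x - μ0) ^ 2 ≤ (x - μ1) ^ 2 := by nlinarith [hm]
    simpa [hh, sub_nonneg] using hcmp μ0 μ1 x this
  have hSc_nonpos : ∀ x : ℝ, m ≤ x → h x ≤ 0 := by
    intro x hx
    have : (x - μ1) ^ 2 ≤ (x - μ0) ^ 2 := by nlinarith [hm]
    simpa [hh, sub_nonpos] using hcmp μ1 μ0 x this
  set Dval : ℝ := ∫ x in Set.Iic m, h x with hDval
  have hD0 : 0 ≤ Dval := setIntegral_nonneg measurableSet_Iic hS_nonneg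
  -- key bound
  have key1 : ∀ s : Set ℝ, MeasurableSet s → ∫ x in s, h x ≤ Dval := by
    intro s hs
    have hsplit := integral_inter_add_diff (μ := volume) (f := h) (s := s)
      (t := Set.Iic m) measurableSet_Iic hInt.integrableOn
    have h1 : ∫ x in s ∩ Set.Iic m, h x ≤ Dval := by
      refine setIntegral_mono_set hInt.integrableOn ?_ (HasSubset.Subset.eventuallyLE
        Set.inter_subset_right)
      filter_upwards [ae_restrict_mem measurableSet_Iic] with x hx using hS_nonneg x hx
    have h2 : ∫ x in s \ Set.Iic m, h x ≤ 0 := by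
      refine setIntegral_nonpos (hs.diff measurableSet_Iic) ?_
      intro x hx
      exact hSc_nonpos x (le_of_lt (by simpa [Set.mem_Iic, not_le] using hx.2))
    linarith
  have htotal : ∫ x, h x = 0 := by
    rw [hh]
    rw [integral_sub hint0 hint1, hf0, hf1, integral_gaussianPDFReal_eq_one μ0 hv,
      integral_gaussianPDFReal_eq_one μ1 hv]
    ring
  have diff : ∀ s : Set ℝ, (P s).toReal - (Q s).toReal = ∫ x in s, h x := by
    intro s
    rw [hP, hQ, happly, happly, ← integral_sub hint0.integrableOn hint1.integrableOn]
  have bound : ∀ s : Set ℝ, MeasurableSet s → |(P s).toReal - (Q s).toReal| ≤ Dval := by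
    intro s hs
    rw [diff s]
    rw [abs_le]
    constructor
    · have hcompl := key1 sᶜ hs.compl
      have := integral_add_compl hs hInt
      rw [htotal] at this
      linarith
    · exact key1 s hs
  -- tv equals Dval
  have htv : tv P Q = Dval := by
    refine le_antisymm (ciSup_le fun A => bound A.1 A.2) ?_
    have hb : BddAbove (Set.range fun A : {A : Set ℝ // MeasurableSet A} =>
        |(P A.1).toReal - (Q A.1).toReal|) := by
      refine ⟨Dval, ?_⟩
      rintro x ⟨A, rfl⟩
      exact bound A.1 A.2
    have hle' := le_ciSup hb ⟨Set.Iic m, measurableSet_Iic⟩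
    calc Dval = |(P (Set.Iic m)).toReal - (Q (Set.Iic m)).toReal| := by
          rw [diff, ← hDval, abs_of_nonneg hD0]
      _ ≤ _ := hle'
  rw [htv]
  -- compute Dval
  have hQmap : Q = P.map (· + d) := by
    rw [hP, hQ, gaussianReal_map_add_const d]
    congr 1
    rw [hd]; ring
  have hQIic : Q (Set.Iic m) = P (Set.Iic (m - d)) := by
    rw [hQmap, Measure.map_apply (measurable_add_const d) measurableSet_Iic]
    congr 1
    ext x
    simp only [Set.mem_preimage, Set.mem_Iic]
    constructor <;> intro <;> linarith
  have hDval2 : Dval = ∫ x in (m - d)..m, f0 x := by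
    rw [hDval]
    have : ∫ x in Set.Iic m, h x = (∫ x in Set.Iic m, f0 x) - ∫ x in Set.Iic m, f1 x := by
      rw [hh]
      exact integral_sub hint0.integrableOn hint1.integrableOn
    rw [this]
    have h1 : ∫ x in Set.Iic m, f1 x = ∫ x in Set.Iic (m - d), f0 x := by
      rw [hf1, hf0, ← happly, ← happly, ← hP, ← hQ, hQIic]
    rw [h1]
    exact intervalIntegral.integral_Iic_sub_Iic (a := m - d) (b := m) (f := f0)
      (μ := volume) hint0.integrableOn hint0.integrableOn
  rw [hDval2]
  have hmd : m - d = μ0 - d / 2 := by rw [hm, hd]; ring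
  have hm' : m = μ0 + d / 2 := by rw [hm, hd]; ring
  rw [hmd, hm', hf0, integral_gaussianPDFReal_symm μ0 σ (d / 2) hσ v hvR]
  congr 1
  rw [hd, div_div, ← mul_assoc]

/-- Total variation between two one-dimensional Gaussians with the same
variance `σ²`: `tv = erf (|μ0 - μ1| / (2√2 σ))`. -/
theorem tv_gaussianReal_eq_erf (μ0 μ1 σ : ℝ) (hσ : 0 < σ) :
    tv (gaussianReal μ0 ((σ ^ 2).toNNReal)) (gaussianReal μ1 ((σ ^ 2).toNNReal))
      = erf (|μ0 - μ1| / (2 * Real.sqrt 2 * σ)) := by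
  rcases le_total μ0 μ1 with hle | hle
  · rw [abs_of_nonpos (by linarith), neg_sub]
    exact tv_gaussianReal_aux μ0 μ1 σ hσ hle
  · rw [abs_of_nonneg (by linarith), tv_comm]
    have := tv_gaussianReal_aux μ1 μ0 σ hσ hle
    rw [this]
end

section
/- Fix T ≥ 1, d ≥ 1, subsampling probability p ∈ [0,1], noise multiplier σ > 0 and clipping norm C > 0. Let g0, g1 : {1,…,T} → ℝ^d satisfy ‖g0(t)‖₂ ≤ C and ‖g1(t)‖₂ ≤ C for all t. Then the DP-SGD gradient mixtures satisfy tv(M(g0), M(g1)) ≤ erf(p·√T/(√2 σ)) + √(p·T·(1−p))/σ; equivalently, the Bayes security of DP-SGD against record-level membership inference satisfies 1 − tv(M(g0), M(g1)) ≥ 1 − erf(p·√T/(√2 σ)) − √(p·T·(1−p))/σ. -/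
open MeasureTheory ProbabilityTheory

/-- The DP-SGD gradient mixture on `(ℝ^d)^T` for a mean sequence `g`:
`M(g) = ∑_{b ∈ {0,1}^T} p^{|b|} (1-p)^{T-|b|} ⊗_t N(b_t g(t), v I_d)`. -/
noncomputable def dpsgdMixture (T d : ℕ) (p : ℝ) (v : NNReal)
    (g : Fin T → Fin d → ℝ) : Measure (Fin T → Fin d → ℝ) :=
  ∑ b : Fin T → Bool,
    (ENNReal.ofReal (p ^ (Finset.univ.filter fun t => b t = true).card *
        (1 - p) ^ (T - (Finset.univ.filter fun t => b t = true).card))) •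
      Measure.pi (fun t => Measure.pi (fun j => gaussianReal (if b t then g t j else 0) v))

/-!
Fix the subsampling pattern `b`. The two conditional laws are isotropic Gaussians whose means
differ only in the `k = |b|` sampled steps, each by at most `2C`. For such a pair the privacy loss
`ℓ = log dQ/dP` is itself Gaussian, `N(-θ/2, θ)` under `P`, and this property survives products
because privacy losses of independent coordinates add and independent Gaussians convolve. The
total variation of such a pair is `∫ (1 - e^ℓ)₊ dP = erf (√θ / (2√2))`, here at most
`erf (√k / (√2 σ))`. Joint convexity of total variation averages these bounds over
`k ~ Bin(T, p)`; as `erf` is `2/√π`-Lipschitz, the average is at most `erf (p√T / (√2 σ))` plus a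
multiple of `E (√k - p√T)₊ ≤ √(E (√k - p√T)²) ≤ √(T p (1 - p))`, where the last step uses only
`E k = p T` and `√k ≥ k / √T`.
-/

open Real Set
open scoped NNReal ENNReal

section TotalVariation

variable {Ω : Type*} [MeasurableSpace Ω]

lemma tv_le_of_forall {P Q : Measure Ω} {c : ℝ}
    (h : ∀ A, MeasurableSet A → |(P A).toReal - (Q A).toReal| ≤ c) : tv P Q ≤ c := by
  have : Nonempty {A : Set Ω // MeasurableSet A} := ⟨⟨∅, .empty⟩⟩
  exact ciSup_le fun A => h A.1 A.2

lemma abs_sub_le_tv (P Q : Measure Ω) [IsFiniteMeasure P] [IsFiniteMeasure Q] {A : Set Ω}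
    (hA : MeasurableSet A) : |(P A).toReal - (Q A).toReal| ≤ tv P Q := by
  refine le_ciSup (f := fun A : {A : Set Ω // MeasurableSet A} =>
    |(P A.1).toReal - (Q A.1).toReal|) ⟨(P univ).toReal + (Q univ).toReal, ?_⟩ ⟨A, hA⟩
  rintro _ ⟨B, rfl⟩
  have hP := ENNReal.toReal_mono (measure_ne_top P _) (measure_mono (subset_univ B.1))
  have hQ := ENNReal.toReal_mono (measure_ne_top Q _) (measure_mono (subset_univ B.1))
  rw [abs_le]
  constructor <;> linarith [(P B.1).toReal_nonneg, (Q B.1).toReal_nonneg]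

lemma tv_sum_smul_le {ι : Type*} [Fintype ι] (w : ι → ℝ) (hw : ∀ i, 0 ≤ w i)
    (P Q : ι → Measure Ω) [∀ i, IsFiniteMeasure (P i)] [∀ i, IsFiniteMeasure (Q i)] :
    tv (∑ i, ENNReal.ofReal (w i) • P i) (∑ i, ENNReal.ofReal (w i) • Q i)
      ≤ ∑ i, w i * tv (P i) (Q i) := by
  refine tv_le_of_forall fun A hA => ?_
  have hreal (μ : ι → Measure Ω) [∀ i, IsFiniteMeasure (μ i)] :
      ((∑ i, ENNReal.ofReal (w i) • μ i) A).toReal = ∑ i, w i * (μ i A).toReal := by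
    simp only [Measure.finsetSum_apply, Measure.smul_apply, smul_eq_mul]
    rw [ENNReal.toReal_sum fun i _ =>
      ENNReal.mul_ne_top ENNReal.ofReal_ne_top (measure_ne_top _ _)]
    simp [ENNReal.toReal_ofReal (hw _)]
  rw [hreal, hreal, ← Finset.sum_sub_distrib]
  refine (Finset.abs_sum_le_sum_abs _ _).trans (Finset.sum_le_sum fun i _ => ?_)
  rw [← mul_sub, abs_mul, abs_of_nonneg (hw i)]
  exact mul_le_mul_of_nonneg_left (abs_sub_le_tv _ _ hA) (hw i)

end TotalVariation

lemma intervalIntegrable_exp_neg_sq (a b : ℝ) :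
    IntervalIntegrable (fun t => exp (-t ^ 2)) volume a b := by
  apply Continuous.intervalIntegrable; fun_prop

lemma erf_sub_erf (x y : ℝ) :
    erf y - erf x = 2 / √π * ∫ t in x..y, exp (-t ^ 2) := by
  rw [erf, erf, ← mul_sub, intervalIntegral.integral_interval_sub_left
    (intervalIntegrable_exp_neg_sq _ _) (intervalIntegrable_exp_neg_sq _ _)]

lemma erf_neg (x : ℝ) : erf (-x) = -erf x := by
  have h := intervalIntegral.integral_comp_neg (a := 0) (b := x) (fun t => exp (-t ^ 2))
  simp only [neg_sq, neg_zero] at h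
  rw [erf, erf, intervalIntegral.integral_symm, ← h, mul_neg]

lemma integral_exp_neg_sq_symm (c : ℝ) : ∫ t in -c..c, exp (-t ^ 2) = √π * erf c := by
  have h := erf_sub_erf (-c) c
  rw [erf_neg] at h
  have : √π ≠ 0 := by positivity
  field_simp at h ⊢
  linarith

lemma erf_monotone : Monotone erf := fun x y hxy => by
  rw [← sub_nonneg, erf_sub_erf]
  exact mul_nonneg (by positivity) (intervalIntegral.integral_nonneg hxy fun t _ => (exp_pos _).le)

lemma erf_sub_erf_le {x y : ℝ} (hxy : x ≤ y) : erf y - erf x ≤ 2 / √π * (y - x) := by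
  rw [erf_sub_erf]
  gcongr
  calc ∫ t in x..y, exp (-t ^ 2) ≤ ∫ _ in x..y, (1 : ℝ) :=
        intervalIntegral.integral_mono_on hxy (intervalIntegrable_exp_neg_sq _ _)
          intervalIntegrable_const fun t _ => exp_le_one_iff.mpr (by nlinarith)
    _ = y - x := by simp

lemma erf_le_add_max (x y : ℝ) : erf y ≤ erf x + 2 / √π * max (y - x) 0 := by
  rcases le_total y x with hyx | hxy
  · have : 0 ≤ 2 / √π * max (y - x) 0 := by positivity
    linarith [erf_monotone hyx]
  · rw [max_eq_left (sub_nonneg.mpr hxy)]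
    linarith [erf_sub_erf_le hxy]

lemma two_div_sqrt_pi_le_sqrt_two : 2 / √π ≤ √2 := by
  rw [div_le_iff₀ (by positivity), ← sqrt_mul zero_le_two]
  exact (le_abs_self 2).trans (abs_le_sqrt (by nlinarith [pi_gt_three]))

lemma gaussianReal_Ioc_toReal {m a : ℝ} {v : ℝ≥0} (hv : v ≠ 0) (ha : 0 ≤ a) :
    (gaussianReal m v (Ioc (m - a) (m + a))).toReal = erf (a / √(2 * v)) := by
  have hs : 0 < √(2 * (v : ℝ)) := by positivity
  have hpdf (x : ℝ) : gaussianPDFReal m v x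
      = (√(2 * π * v))⁻¹ * exp (-(x / √(2 * v) - m / √(2 * v)) ^ 2) := by
    simp only [gaussianPDFReal_def]
    rw [← sub_div, div_pow, sq_sqrt (by positivity), neg_div]
  rw [gaussianReal_apply_eq_integral _ hv, ENNReal.toReal_ofReal
    (setIntegral_nonneg measurableSet_Ioc fun x _ => gaussianPDFReal_nonneg m v x),
    ← intervalIntegral.integral_of_le (by linarith)]
  simp_rw [hpdf]
  rw [intervalIntegral.integral_const_mul, intervalIntegral.integral_comp_div_sub
    (fun t => exp (-t ^ 2)) hs.ne', ← sub_div, ← sub_div, show m - a - m = -a by ring,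
    show m + a - m = a by ring, neg_div, integral_exp_neg_sq_symm, smul_eq_mul,
    show 2 * π * (v : ℝ) = π * (2 * v) by ring, sqrt_mul pi_pos.le]
  field_simp

lemma gaussianReal_withDensity_exp {m₀ m₁ : ℝ} {v : ℝ≥0} (hv : v ≠ 0) :
    (gaussianReal m₀ v).withDensity
        (fun x => ENNReal.ofReal (exp (((m₁ - m₀) * x - (m₁ ^ 2 - m₀ ^ 2) / 2) / v)))
      = gaussianReal m₁ v := by
  rw [gaussianReal_of_var_ne_zero m₀ hv, gaussianReal_of_var_ne_zero m₁ hv,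
    ← withDensity_mul _ (measurable_gaussianPDF m₀ v) (by fun_prop)]
  congr 1
  funext x
  rw [Pi.mul_apply, gaussianPDF, gaussianPDF, ← ENNReal.ofReal_mul (gaussianPDFReal_nonneg m₀ v x)]
  simp only [gaussianPDFReal_def]
  rw [mul_assoc, ← exp_add]
  congr 3
  field_simp
  ring

lemma integral_posPart_one_sub_exp_gaussianReal {θ : ℝ} (hθ : 0 ≤ θ) :
    ∫ y, max (1 - exp y) 0 ∂(gaussianReal (-θ / 2) θ.toNNReal) = erf (√θ / (2 * √2)) := by
  rcases hθ.eq_or_lt with rfl | hθ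
  · simp [erf]
  set N := gaussianReal (-θ / 2) θ.toNNReal
  have hv : θ.toNNReal ≠ 0 := by simpa using hθ
  have hposPart : (fun y => max (1 - exp y) 0) = (Iic 0).indicator (fun y => 1 - exp y) := by
    funext y
    by_cases hy : y ≤ 0
    · simp [hy, exp_le_one_iff.mpr hy]
    · simp [hy, (one_lt_exp_iff.mpr (not_le.mp hy)).le]
  have hint : Integrable (fun y => exp y) N := by
    simpa using integrable_exp_mul_gaussianReal (μ := -θ / 2) (v := θ.toNNReal) 1
  -- exponential tilting turns `N` into its mirror image `N.map (· + θ)`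
  have htilt : ∫ y in Iic 0, exp y ∂N = (N (Iic (-θ))).toReal := by
    have h := gaussianReal_withDensity_exp (m₀ := -θ / 2) (m₁ := θ / 2) hv
    have hexp (x : ℝ) : ((θ / 2 - -θ / 2) * x - ((θ / 2) ^ 2 - (-θ / 2) ^ 2) / 2)
        / (θ.toNNReal : ℝ) = x := by
      rw [Real.coe_toNNReal _ hθ.le]; field_simp; ring
    simp only [hexp] at h
    rw [show θ / 2 = -θ / 2 + θ by ring, ← gaussianReal_map_add_const θ] at h
    have hpre : (· + θ) ⁻¹' Iic (0 : ℝ) = Iic (-θ) := by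
      ext; simp [le_neg_iff_add_nonpos_right]
    have := congrArg (fun μ : Measure ℝ => (μ (Iic 0)).toReal) h
    rw [withDensity_apply _ measurableSet_Iic, ← ofReal_integral_eq_lintegral_ofReal
      hint.integrableOn (ae_of_all _ fun y => (exp_pos y).le), ENNReal.toReal_ofReal
      (setIntegral_nonneg measurableSet_Iic fun y _ => (exp_pos y).le),
      Measure.map_apply (measurable_add_const θ) measurableSet_Iic, hpre] at this
    exact this
  have hsplit : (N (Iic 0)).toReal = (N (Iic (-θ))).toReal + (N (Ioc (-θ) 0)).toReal := by
    rw [← ENNReal.toReal_add (measure_ne_top _ _) (measure_ne_top _ _),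
      ← measure_union (Iic_disjoint_Ioc le_rfl) measurableSet_Ioc,
      Iic_union_Ioc_eq_Iic (by linarith)]
  rw [hposPart, integral_indicator measurableSet_Iic, integral_sub (integrable_const _).integrableOn
    hint.integrableOn, setIntegral_const, htilt, smul_eq_mul, mul_one, measureReal_def, hsplit,
    add_sub_cancel_left, show Ioc (-θ) 0 = Ioc (-θ / 2 - θ / 2) (-θ / 2 + θ / 2) by ring_nf,
    gaussianReal_Ioc_toReal hv (by linarith), Real.coe_toNNReal _ hθ.le]
  congr 1
  have := sq_sqrt hθ.le
  rw [sqrt_mul zero_le_two]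
  field_simp
  linarith

lemma abs_sub_le_integral_posPart_one_sub {Ω : Type*} [MeasurableSpace Ω] {P Q : Measure Ω}
    [IsProbabilityMeasure P] [IsProbabilityMeasure Q] {r : Ω → ℝ} (hr : Measurable r)
    (hr0 : ∀ x, 0 ≤ r x) (hQ : Q = P.withDensity fun x => ENNReal.ofReal (r x))
    {A : Set Ω} (hA : MeasurableSet A) :
    |(P A).toReal - (Q A).toReal| ≤ ∫ x, max (1 - r x) 0 ∂P := by
  have hQ_apply {B : Set Ω} (hB : MeasurableSet B) :
      Q B = ∫⁻ x in B, ENNReal.ofReal (r x) ∂P := by rw [hQ, withDensity_apply _ hB]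
  have hint : Integrable r P := by
    refine ⟨hr.aestronglyMeasurable, (hasFiniteIntegral_iff_ofReal (ae_of_all _ hr0)).mpr ?_⟩
    rw [← setLIntegral_univ, ← hQ_apply .univ, measure_univ]
    exact ENNReal.one_lt_top
  set f : Ω → ℝ := fun x => 1 - r x
  have hf : Integrable f P := (integrable_const 1).sub hint
  have hsub {B : Set Ω} (hB : MeasurableSet B) :
      (P B).toReal - (Q B).toReal = ∫ x in B, f x ∂P := by
    rw [hQ_apply hB, ← ofReal_integral_eq_lintegral_ofReal hint.integrableOn (ae_of_all _ hr0),
      ENNReal.toReal_ofReal (setIntegral_nonneg hB fun x _ => hr0 x),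
      integral_sub (integrable_const 1).integrableOn hint.integrableOn, setIntegral_const,
      smul_eq_mul, mul_one, measureReal_def]
  have hf_zero : ∫ x, f x ∂P = 0 := by
    rw [← setIntegral_univ, ← hsub .univ, measure_univ, measure_univ, sub_self]
  have hle {B : Set Ω} (hB : MeasurableSet B) : ∫ x in B, f x ∂P ≤ ∫ x, max (f x) 0 ∂P :=
    (setIntegral_mono hf.integrableOn hf.pos_part.integrableOn fun x => le_max_left _ _).trans
      (setIntegral_le_integral hf.pos_part (ae_of_all _ fun x => le_max_right _ _))
  rw [abs_sub_le_iff, hsub hA]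
  refine ⟨hle hA, ?_⟩
  have := integral_add_compl hA hf
  rw [hf_zero] at this
  linarith [hle hA.compl, hsub hA]

-- Such a pair is exactly as hard to tell apart as `N(0, 1)` and `N(√θ, 1)`.
structure HasGaussianPrivacyLoss {Ω : Type*} [MeasurableSpace Ω] (P Q : Measure Ω) (θ : ℝ) :
    Prop where
  isProbabilityMeasure_left : IsProbabilityMeasure P
  isProbabilityMeasure_right : IsProbabilityMeasure Q
  nonneg : 0 ≤ θ
  exists_loss : ∃ ℓ : Ω → ℝ, Measurable ℓ ∧
    Q = P.withDensity (fun x => ENNReal.ofReal (exp (ℓ x))) ∧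
    P.map ℓ = gaussianReal (-θ / 2) θ.toNNReal

namespace HasGaussianPrivacyLoss

variable {Ω Ω' : Type*} [MeasurableSpace Ω] [MeasurableSpace Ω'] {P Q : Measure Ω} {θ : ℝ}

lemma refl (P : Measure Ω) [IsProbabilityMeasure P] : HasGaussianPrivacyLoss P P 0 :=
  ⟨inferInstance, inferInstance, le_rfl, fun _ => 0, measurable_const, by simp, by simp⟩

lemma map_measurableEquiv (h : HasGaussianPrivacyLoss P Q θ) (e : Ω ≃ᵐ Ω') :
    HasGaussianPrivacyLoss (P.map e) (Q.map e) θ := by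
  obtain ⟨hP, hQ, hθ, ℓ, hℓ, hQP, hℓP⟩ := h
  refine ⟨Measure.isProbabilityMeasure_map e.measurable.aemeasurable,
    Measure.isProbabilityMeasure_map e.measurable.aemeasurable, hθ,
    ℓ ∘ e.symm, hℓ.comp e.symm.measurable, ?_, ?_⟩
  · ext s hs
    rw [hQP, Measure.map_apply e.measurable hs, withDensity_apply _ (e.measurable hs),
      withDensity_apply _ hs, setLIntegral_map hs (by fun_prop) e.measurable]
    simp
  · rw [Measure.map_map (hℓ.comp e.symm.measurable) e.measurable]
    rwa [Function.comp_assoc, e.symm_comp_self, Function.comp_id]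

lemma prod {P' Q' : Measure Ω'} {θ' : ℝ} (h : HasGaussianPrivacyLoss P Q θ)
    (h' : HasGaussianPrivacyLoss P' Q' θ') :
    HasGaussianPrivacyLoss (P.prod P') (Q.prod Q') (θ + θ') := by
  obtain ⟨hP, hQ, hθ, ℓ, hℓ, hQP, hℓP⟩ := h
  obtain ⟨hP', hQ', hθ', ℓ', hℓ', hQP', hℓP'⟩ := h'
  refine ⟨inferInstance, inferInstance, add_nonneg hθ hθ', fun x => ℓ x.1 + ℓ' x.2, by fun_prop,
    ?_, ?_⟩
  · refine Measure.prod_eq fun s t hs ht => ?_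
    simp_rw [withDensity_apply _ (hs.prod ht), ← Measure.prod_restrict, exp_add,
      ENNReal.ofReal_mul (exp_nonneg _)]
    rw [lintegral_prod_mul (f := fun x => ENNReal.ofReal (exp (ℓ x)))
      (g := fun y => ENNReal.ofReal (exp (ℓ' y))) (by fun_prop) (by fun_prop), hQP, hQP',
      withDensity_apply _ hs, withDensity_apply _ ht]
  · have : (fun x : Ω × Ω' => ℓ x.1 + ℓ' x.2) = (fun y : ℝ × ℝ => y.1 + y.2) ∘ Prod.map ℓ ℓ' :=
      rfl
    rw [this, ← Measure.map_map (by fun_prop) (hℓ.prodMap hℓ'), ← Measure.map_prod_map _ _ hℓ hℓ',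
      hℓP, hℓP', ← Measure.conv, gaussianReal_conv_gaussianReal, Real.toNNReal_add hθ hθ']
    congr 1
    ring

end HasGaussianPrivacyLoss

lemma hasGaussianPrivacyLoss_gaussianReal {m₀ m₁ : ℝ} {v : ℝ≥0} (hv : v ≠ 0) :
    HasGaussianPrivacyLoss (gaussianReal m₀ v) (gaussianReal m₁ v) ((m₁ - m₀) ^ 2 / v) := by
  have hθ : 0 ≤ (m₁ - m₀) ^ 2 / v := by positivity
  refine ⟨inferInstance, inferInstance, hθ, fun x => ((m₁ - m₀) * x - (m₁ ^ 2 - m₀ ^ 2) / 2) / v,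
    by fun_prop, (gaussianReal_withDensity_exp hv).symm, ?_⟩
  have : (fun x : ℝ => ((m₁ - m₀) * x - (m₁ ^ 2 - m₀ ^ 2) / 2) / v)
      = (· + -(m₁ ^ 2 - m₀ ^ 2) / (2 * v)) ∘ ((m₁ - m₀) / v * ·) := by
    funext x
    simp only [Function.comp_apply]
    field_simp
    ring
  rw [this, ← Measure.map_map (measurable_add_const _) (measurable_const_mul _),
    gaussianReal_map_const_mul, gaussianReal_map_add_const]
  congr 1
  · field_simp
    ring
  · rw [← NNReal.coe_inj]
    push_cast [Real.coe_toNNReal _ hθ]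
    field_simp

lemma hasGaussianPrivacyLoss_pi {n : ℕ} {X : Fin n → Type*} [∀ i, MeasurableSpace (X i)]
    {P Q : ∀ i, Measure (X i)} {θ : Fin n → ℝ} (h : ∀ i, HasGaussianPrivacyLoss (P i) (Q i) (θ i)) :
    HasGaussianPrivacyLoss (Measure.pi P) (Measure.pi Q) (∑ i, θ i) := by
  induction n with
  | zero =>
    have : ∀ i, IsProbabilityMeasure (P i) := fun i => i.elim0
    rw [Measure.pi_of_empty P, Measure.pi_of_empty Q, Finset.univ_eq_empty, Finset.sum_empty]
    exact .refl _
  | succ n ih =>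
    have := fun i => (h i).isProbabilityMeasure_left
    have := fun i => (h i).isProbabilityMeasure_right
    have hsplit := ((h 0).prod (ih fun j => h (Fin.succAbove 0 j))).map_measurableEquiv
      (MeasurableEquiv.piFinSuccAbove X 0).symm
    rwa [((measurePreserving_piFinSuccAbove P 0).symm _).map_eq,
      ((measurePreserving_piFinSuccAbove Q 0).symm _).map_eq, ← Fin.sum_univ_succAbove θ 0]
      at hsplit

namespace HasGaussianPrivacyLoss

variable {Ω : Type*} [MeasurableSpace Ω] {P Q : Measure Ω} {θ : ℝ}

lemma tv_le (h : HasGaussianPrivacyLoss P Q θ) : tv P Q ≤ erf (√θ / (2 * √2)) := by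
  obtain ⟨hP, hQ, hθ, ℓ, hℓ, hQP, hℓP⟩ := h
  refine tv_le_of_forall fun A hA => ?_
  calc |(P A).toReal - (Q A).toReal| ≤ ∫ x, max (1 - exp (ℓ x)) 0 ∂P :=
        abs_sub_le_integral_posPart_one_sub (by fun_prop) (fun x => (exp_pos _).le) hQP hA
    _ = ∫ y, max (1 - exp y) 0 ∂(P.map ℓ) :=
        (integral_map (f := fun y => max (1 - exp y) 0) hℓ.aemeasurable (by fun_prop)).symm
    _ = erf (√θ / (2 * √2)) := by rw [hℓP, integral_posPart_one_sub_exp_gaussianReal hθ]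

end HasGaussianPrivacyLoss

open Finset

section SubsampleWeight

variable {ι : Type*} [Fintype ι]

def subsampleWeight (p : ℝ) (b : ι → Bool) : ℝ := ∏ i, if b i then p else 1 - p

lemma subsampleWeight_nonneg {p : ℝ} (hp0 : 0 ≤ p) (hp1 : p ≤ 1) (b : ι → Bool) :
    0 ≤ subsampleWeight p b :=
  prod_nonneg fun i _ => by split_ifs <;> linarith

lemma subsampleWeight_eq_pow_mul_pow (p : ℝ) (b : ι → Bool) :
    subsampleWeight p b
      = p ^ #{i | b i = true} * (1 - p) ^ (Fintype.card ι - #{i | b i = true}) := by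
  rw [subsampleWeight, prod_ite, prod_const, prod_const]
  have := card_filter_add_card_filter_not (s := univ) (p := fun i => b i = true)
  rw [card_univ] at this
  congr 2
  omega

variable [DecidableEq ι]

lemma sum_subsampleWeight (p : ℝ) : ∑ b : ι → Bool, subsampleWeight p b = 1 := by
  simp only [subsampleWeight]
  rw [← Fintype.prod_sum fun (_ : ι) (β : Bool) => if β then p else 1 - p]
  simp

lemma sum_subsampleWeight_mul_card (p : ℝ) :
    ∑ b : ι → Bool, subsampleWeight p b * #{i | b i = true} = p * Fintype.card ι := by
  have hmarginal (i : ι) : ∑ b : ι → Bool, subsampleWeight p b * (if b i then 1 else 0) = p := by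
    have hprod (b : ι → Bool) : subsampleWeight p b * (if b i then 1 else 0)
        = ∏ j, (if b j then p else 1 - p) * (if j = i then (if b j then 1 else 0) else 1) := by
      rw [prod_mul_distrib, Finset.prod_ite_eq', if_pos (Finset.mem_univ i), subsampleWeight]
    simp_rw [hprod]
    rw [← Fintype.prod_sum fun j (β : Bool) =>
      (if β then p else 1 - p) * (if j = i then (if β then 1 else 0) else 1)]
    simp [prod_ite_eq']
  calc ∑ b : ι → Bool, subsampleWeight p b * #{i | b i = true}
      = ∑ i, ∑ b : ι → Bool, subsampleWeight p b * (if b i then 1 else 0) := by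
        simp_rw [card_filter, Nat.cast_sum, Nat.cast_ite, Nat.cast_one, Nat.cast_zero, mul_sum]
        exact sum_comm
    _ = p * Fintype.card ι := by
        rw [sum_congr rfl fun i _ => hmarginal i, sum_const, card_univ, nsmul_eq_mul, mul_comm]

end SubsampleWeight

lemma sum_mul_max_sqrt_sub_le {α : Type*} [Fintype α] {w K : α → ℝ} {p T : ℝ}
    (hw : ∀ a, 0 ≤ w a) (hw1 : ∑ a, w a = 1) (hK0 : ∀ a, 0 ≤ K a) (hKT : ∀ a, K a ≤ T)
    (hmean : ∑ a, w a * K a = p * T) :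
    ∑ a, w a * max (√(K a) - p * √T) 0 ≤ √(p * T * (1 - p)) := by
  have hT : 0 ≤ T := by
    obtain ⟨a, -⟩ : ∃ a, w a ≠ 0 := by
      by_contra! h
      simp [h] at hw1
    exact (hK0 a).trans (hKT a)
  set c := p * √T
  have hjensen : (∑ a, w a * max (√(K a) - c) 0) ^ 2 ≤ ∑ a, w a * max (√(K a) - c) 0 ^ 2 :=
    (convexOn_pow 2).map_sum_le (fun a _ => hw a) hw1 fun a _ => mem_Ici.mpr (le_max_right _ _)
  have hsq (a : α) : max (√(K a) - c) 0 ^ 2 ≤ K a - 2 * c * √(K a) + c ^ 2 := by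
    have := sq_sqrt (hK0 a)
    rcases le_total (√(K a) - c) 0 with h | h
    · rw [max_eq_right h]; nlinarith
    · rw [max_eq_left h]; nlinarith
  have hc : c = (∑ a, w a * K a) / √T := by rw [hmean, mul_div_assoc, div_sqrt]
  have hc0 : 0 ≤ c :=
    hc ▸ div_nonneg (sum_nonneg fun a _ => mul_nonneg (hw a) (hK0 a)) (sqrt_nonneg _)
  have hmean_sqrt : c ≤ ∑ a, w a * √(K a) := by
    calc c = (∑ a, w a * K a) / √T := hc
      _ = ∑ a, w a * (K a / √T) := by simp_rw [sum_div, mul_div_assoc]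
      _ ≤ ∑ a, w a * √(K a) := by
        refine sum_le_sum fun a _ => mul_le_mul_of_nonneg_left ?_ (hw a)
        refine div_le_of_le_mul₀ (sqrt_nonneg _) (sqrt_nonneg _) ?_
        calc K a = √(K a) * √(K a) := (mul_self_sqrt (hK0 a)).symm
          _ ≤ √(K a) * √T := by gcongr; exact hKT a
  have hvar : ∑ a, w a * max (√(K a) - c) 0 ^ 2 ≤ p * T * (1 - p) := by
    calc ∑ a, w a * max (√(K a) - c) 0 ^ 2
        ≤ ∑ a, w a * (K a - 2 * c * √(K a) + c ^ 2) :=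
          sum_le_sum fun a _ => mul_le_mul_of_nonneg_left (hsq a) (hw a)
      _ = p * T - 2 * c * ∑ a, w a * √(K a) + c ^ 2 := by
          have (a : α) : w a * (K a - 2 * c * √(K a) + c ^ 2)
              = w a * K a - 2 * c * (w a * √(K a)) + c ^ 2 * w a := by ring
          rw [sum_congr rfl fun a _ => this a, sum_add_distrib, sum_sub_distrib, ← mul_sum,
            ← mul_sum, hmean, hw1, mul_one]
      _ ≤ p * T * (1 - p) := by
          have : c ^ 2 = p ^ 2 * T := by rw [mul_pow, sq_sqrt hT]
          nlinarith
  exact (le_abs_self _).trans (abs_le_sqrt (hjensen.trans hvar))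

lemma sum_subsampleWeight_mul_erf_le {ι : Type*} [Fintype ι] [DecidableEq ι] {p c : ℝ}
    (hp0 : 0 ≤ p) (hp1 : p ≤ 1) (hc : 0 ≤ c) :
    ∑ b : ι → Bool, subsampleWeight p b * erf (c * √(#{i | b i = true} : ℝ))
      ≤ erf (c * (p * √(Fintype.card ι))) + 2 / √π * c * √(p * Fintype.card ι * (1 - p)) := by
  have hw := subsampleWeight_nonneg (ι := ι) hp0 hp1
  calc ∑ b : ι → Bool, subsampleWeight p b * erf (c * √(#{i | b i = true} : ℝ))
      ≤ ∑ b : ι → Bool, subsampleWeight p b * (erf (c * (p * √(Fintype.card ι)))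
          + 2 / √π * c * max (√(#{i | b i = true} : ℝ) - p * √(Fintype.card ι)) 0) := by
        refine sum_le_sum fun b _ => mul_le_mul_of_nonneg_left ?_ (hw b)
        rw [mul_assoc, mul_max_of_nonneg _ _ hc, mul_zero, mul_sub]
        exact erf_le_add_max _ _
    _ = erf (c * (p * √(Fintype.card ι))) + 2 / √π * c
          * ∑ b : ι → Bool, subsampleWeight p b
            * max (√(#{i | b i = true} : ℝ) - p * √(Fintype.card ι)) 0 := by
        simp_rw [mul_add, sum_add_distrib, ← sum_mul, sum_subsampleWeight, one_mul, mul_sum]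
        congr 1
        exact sum_congr rfl fun b _ => by ring
    _ ≤ _ := by
        gcongr
        exact sum_mul_max_sqrt_sub_le hw (sum_subsampleWeight p) (fun b => Nat.cast_nonneg _)
          (fun b => Nat.cast_le.mpr (card_le_univ _)) (sum_subsampleWeight_mul_card p)

lemma sqrt_sum_sub_sq_le {ι : Type*} [Fintype ι] (a c : ι → ℝ) :
    √(∑ i, (c i - a i) ^ 2) ≤ √(∑ i, c i ^ 2) + √(∑ i, a i ^ 2) := by
  have h (x : ι → ℝ) : √(∑ i, x i ^ 2) = ‖(WithLp.toLp 2 x : EuclideanSpace ℝ ι)‖ := by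
    simp [EuclideanSpace.norm_eq]
  have := norm_sub_le (WithLp.toLp 2 c : EuclideanSpace ℝ ι) (WithLp.toLp 2 a)
  rwa [← WithLp.toLp_sub, ← h, ← h, ← h] at this

section DPSGD

variable {T d : ℕ}

noncomputable def maskedGaussian (v : ℝ≥0) (g : Fin T → Fin d → ℝ) (b : Fin T → Bool) :
    Measure (Fin T → Fin d → ℝ) :=
  Measure.pi fun t => Measure.pi fun j => gaussianReal (if b t then g t j else 0) v

instance (v : ℝ≥0) (g : Fin T → Fin d → ℝ) (b : Fin T → Bool) :
    IsProbabilityMeasure (maskedGaussian v g b) := by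
  unfold maskedGaussian; infer_instance

lemma dpsgdMixture_eq_sum (p : ℝ) (v : ℝ≥0) (g : Fin T → Fin d → ℝ) :
    dpsgdMixture T d p v g = ∑ b, ENNReal.ofReal (subsampleWeight p b) • maskedGaussian v g b := by
  simp only [dpsgdMixture, maskedGaussian, subsampleWeight_eq_pow_mul_pow, Fintype.card_fin]

lemma tv_pi_gaussianReal_le {v : ℝ≥0} (hv : v ≠ 0) (μ₀ μ₁ : Fin T → Fin d → ℝ) :
    tv (Measure.pi fun t => Measure.pi fun j => gaussianReal (μ₀ t j) v)
        (Measure.pi fun t => Measure.pi fun j => gaussianReal (μ₁ t j) v)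
      ≤ erf (√(∑ t, ∑ j, (μ₁ t j - μ₀ t j) ^ 2 / v) / (2 * √2)) :=
  (hasGaussianPrivacyLoss_pi fun _ => hasGaussianPrivacyLoss_pi fun _ =>
    hasGaussianPrivacyLoss_gaussianReal hv).tv_le

lemma tv_maskedGaussian_le {v : ℝ≥0} (hv : v ≠ 0) {C : ℝ} {g₀ g₁ : Fin T → Fin d → ℝ}
    (hg₀ : ∀ t, √(∑ j, g₀ t j ^ 2) ≤ C) (hg₁ : ∀ t, √(∑ j, g₁ t j ^ 2) ≤ C) (b : Fin T → Bool) :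
    tv (maskedGaussian v g₀ b) (maskedGaussian v g₁ b)
      ≤ erf (√(#{t | b t = true} * (2 * C) ^ 2 / v) / (2 * √2)) := by
  refine (tv_pi_gaussianReal_le hv _ _).trans (erf_monotone ?_)
  have hterm (t : Fin T) : ∑ j, ((if b t then g₁ t j else 0) - (if b t then g₀ t j else 0)) ^ 2
      ≤ if b t then (2 * C) ^ 2 else 0 := by
    split_ifs
    · have : √(∑ j, (g₁ t j - g₀ t j) ^ 2) ≤ 2 * C :=
        (sqrt_sum_sub_sq_le (g₀ t) (g₁ t)).trans (by linarith [hg₀ t, hg₁ t])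
      calc ∑ j, (g₁ t j - g₀ t j) ^ 2 = √(∑ j, (g₁ t j - g₀ t j) ^ 2) ^ 2 :=
            (sq_sqrt (sum_nonneg fun j _ => sq_nonneg _)).symm
        _ ≤ (2 * C) ^ 2 := pow_le_pow_left₀ (sqrt_nonneg _) this 2
    · simp
  gcongr
  calc ∑ t, ∑ j, ((if b t then g₁ t j else 0) - (if b t then g₀ t j else 0)) ^ 2 / v
      = (∑ t, ∑ j, ((if b t then g₁ t j else 0) - (if b t then g₀ t j else 0)) ^ 2) / v := by
        simp_rw [← sum_div]
    _ ≤ (∑ t, if b t then (2 * C) ^ 2 else 0) / v := by gcongr with t; exact hterm t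
    _ = #{t | b t = true} * (2 * C) ^ 2 / v := by
        rw [sum_ite, sum_const_zero, add_zero, sum_const, nsmul_eq_mul]

lemma tv_dpsgdMixture_le {p : ℝ} (hp0 : 0 ≤ p) (hp1 : p ≤ 1) {v : ℝ≥0} (hv : v ≠ 0) {C : ℝ}
    {g₀ g₁ : Fin T → Fin d → ℝ} (hg₀ : ∀ t, √(∑ j, g₀ t j ^ 2) ≤ C)
    (hg₁ : ∀ t, √(∑ j, g₁ t j ^ 2) ≤ C) :
    tv (dpsgdMixture T d p v g₀) (dpsgdMixture T d p v g₁)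
      ≤ ∑ b : Fin T → Bool,
          subsampleWeight p b * erf (√(#{t | b t = true} * (2 * C) ^ 2 / v) / (2 * √2)) := by
  rw [dpsgdMixture_eq_sum, dpsgdMixture_eq_sum]
  refine (tv_sum_smul_le _ (subsampleWeight_nonneg hp0 hp1) _ _).trans (sum_le_sum fun b _ => ?_)
  exact mul_le_mul_of_nonneg_left (tv_maskedGaussian_le hv hg₀ hg₁ b)
    (subsampleWeight_nonneg hp0 hp1 b)

end DPSGD

theorem tv_dpsgdMixture_mia_le_general (T d : ℕ)
    (p σ C : ℝ) (hp0 : 0 ≤ p) (hp1 : p ≤ 1) (hσ : 0 < σ) (hC : 0 < C)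
    (g0 g1 : Fin T → Fin d → ℝ)
    (hg0 : ∀ t, Real.sqrt (∑ j, (g0 t j) ^ 2) ≤ C)
    (hg1 : ∀ t, Real.sqrt (∑ j, (g1 t j) ^ 2) ≤ C) :
    tv (dpsgdMixture T d p ((σ ^ 2 * C ^ 2).toNNReal) g0)
        (dpsgdMixture T d p ((σ ^ 2 * C ^ 2).toNNReal) g1)
      ≤ erf (p * Real.sqrt T / (Real.sqrt 2 * σ))
        + Real.sqrt (p * T * (1 - p)) / σ := by
  set v := (σ ^ 2 * C ^ 2).toNNReal
  have hv : (v : ℝ) = σ ^ 2 * C ^ 2 := Real.coe_toNNReal _ (by positivity)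
  have hv0 : v ≠ 0 := by rw [← NNReal.coe_ne_zero, hv]; positivity
  have harg (k : ℝ) : √(k * (2 * C) ^ 2 / v) / (2 * √2) = 1 / (√2 * σ) * √k := by
    rw [hv, show k * (2 * C) ^ 2 / (σ ^ 2 * C ^ 2) = (2 / σ) ^ 2 * k by field_simp,
      sqrt_mul (sq_nonneg _), sqrt_sq (by positivity)]
    field_simp
  calc tv (dpsgdMixture T d p v g0) (dpsgdMixture T d p v g1)
      ≤ ∑ b, subsampleWeight p b * erf (1 / (√2 * σ) * √(#{t | b t = true} : ℝ)) := by
        simpa only [harg] using tv_dpsgdMixture_le hp0 hp1 hv0 hg0 hg1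
    _ ≤ erf (1 / (√2 * σ) * (p * √T)) + 2 / √π * (1 / (√2 * σ)) * √(p * T * (1 - p)) := by
        simpa using sum_subsampleWeight_mul_erf_le (ι := Fin T) hp0 hp1 (c := 1 / (√2 * σ))
          (by positivity)
    _ ≤ erf (1 / (√2 * σ) * (p * √T)) + √2 * (1 / (√2 * σ)) * √(p * T * (1 - p)) := by
        gcongr
        exact two_div_sqrt_pi_le_sqrt_two
    _ = erf (p * √T / (√2 * σ)) + √(p * T * (1 - p)) / σ := by
        field_simp

/-- MIA bound: for clipped gradient sequences `g0, g1`, the DP-SGD gradient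
mixtures satisfy `tv(M(g0), M(g1)) ≤ erf (p √T / (√2 σ)) + √(pT(1-p))/σ`;
i.e. the Bayes security against record-level membership inference is at least
`1 - erf (p √T / (√2 σ)) - √(pT(1-p))/σ`. -/
theorem tv_dpsgdMixture_mia_le (T d : ℕ) (hT : 1 ≤ T) (hd : 1 ≤ d)
    (p σ C : ℝ) (hp0 : 0 ≤ p) (hp1 : p ≤ 1) (hσ : 0 < σ) (hC : 0 < C)
    (g0 g1 : Fin T → Fin d → ℝ)
    (hg0 : ∀ t, Real.sqrt (∑ j, (g0 t j) ^ 2) ≤ C)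
    (hg1 : ∀ t, Real.sqrt (∑ j, (g1 t j) ^ 2) ≤ C) :
    tv (dpsgdMixture T d p ((σ ^ 2 * C ^ 2).toNNReal) g0)
        (dpsgdMixture T d p ((σ ^ 2 * C ^ 2).toNNReal) g1)
      ≤ erf (p * Real.sqrt T / (Real.sqrt 2 * σ))
        + Real.sqrt (p * T * (1 - p)) / σ :=
  tv_dpsgdMixture_mia_le_general T d p σ C hp0 hp1 hσ hC g0 g1 hg0 hg1
end
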